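/- Maximizing the sum ∑_{i=1}^N SGC-ELBO_i(π) over π is a lower bound on the original goal-conditioned objective: for any π, GC-ELBO(π) ≥ E_{τ∼p_π(·|g)}[∑_i log L_i(τ_i)] − ∑_{i=1}^N KL(p_π(·|sg_i)‖p_ref,i(·)), provided p_π(·|g) = ⊗_i p_π(·|sg_i) and p_ref(·|g) is the i-th marginal product lower-bounded pointwise by ∏_i p_ref,i; i.e., if p_ref(τ|g) ≥ ∏_i p_ref,i(τ_i) for all τ, then KL(p_π(·|g)‖p_ref(·|g)) ≤ ∑_i KL(p_π(·|sg_i)‖p_ref,i). -/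

import Mathlib

open Finset

/-- Marginalization: summing `(∏ j, p j (ω j)) * φ (ω i)` over the product space
gives `∑ x, p i x * φ x` when each `p j` sums to one. -/
lemma marg_aux {N : ℕ} (Ω : Fin N → Type*) [∀ i, Fintype (Ω i)]
    (p : ∀ i, Ω i → ℝ) (hp_sum : ∀ i, ∑ x, p i x = 1) (i : Fin N) (φ : Ω i → ℝ) :
    ∑ ω : (∀ j, Ω j), (∏ j, p j (ω j)) * φ (ω i) = ∑ x, p i x * φ x := by
  classical
  set g : Ω i → ℝ := fun x => p i x * φ x with hg
  set G : ∀ j, Ω j → ℝ := Function.update p i g with hG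
  have hGne : ∀ j, j ≠ i → G j = p j := by
    intro j hj; simp [hG, Function.update_of_ne hj]
  have h1 : ∀ ω : (∀ j, Ω j), (∏ j, p j (ω j)) * φ (ω i) = ∏ j, G j (ω j) := by
    intro ω
    rw [Finset.prod_eq_mul_prod_sdiff_singleton_of_mem (Finset.mem_univ i) (fun j => G j (ω j)),
        Finset.prod_eq_mul_prod_sdiff_singleton_of_mem (Finset.mem_univ i) (fun j => p j (ω j))]
    have hcongr : ∀ j ∈ Finset.univ \ {i}, G j (ω j) = p j (ω j) := by
      intro j hj
      simp only [Finset.mem_sdiff, Finset.mem_singleton] at hj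
      rw [hGne j hj.2]
    rw [Finset.prod_congr rfl hcongr]
    have : G i (ω i) = p i (ω i) * φ (ω i) := by simp [hG, hg]
    rw [this]; ring
  rw [Finset.sum_congr rfl (fun ω _ => h1 ω), ← Fintype.prod_sum G,
      Finset.prod_eq_mul_prod_sdiff_singleton_of_mem (Finset.mem_univ i)]
  have h2 : ∀ j ∈ Finset.univ \ {i}, (∑ x, G j x) = 1 := by
    intro j hj
    simp only [Finset.mem_sdiff, Finset.mem_singleton] at hj
    rw [hGne j hj.2, hp_sum]
  rw [Finset.prod_congr rfl h2, Finset.prod_const_one, mul_one]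
  simp [hG, hg]

/-- If the reference trajectory distribution dominates the product of the per-subgoal
references pointwise, then the goal-conditioned KL is bounded by the sum of
subgoal-conditioned KLs, and hence the GC-ELBO is bounded below by the expected
log-likelihood minus the sum of subgoal-conditioned KLs. -/
theorem sgc_elbo_lower_bounds_gc_elbo {N : ℕ} (Ω : Fin N → Type*)
    [∀ i, Fintype (Ω i)]
    (p r : ∀ i, Ω i → ℝ) (pref : (∀ i, Ω i) → ℝ) (L : ∀ i, Ω i → ℝ)
    (hp_nonneg : ∀ i x, 0 ≤ p i x)
    (hp_sum : ∀ i, ∑ x, p i x = 1)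
    (hr_nonneg : ∀ i x, 0 ≤ r i x)
    (habs : ∀ i x, 0 < p i x → 0 < r i x)
    (hL_pos : ∀ i x, 0 < L i x)
    (hdom : ∀ ω : (∀ i, Ω i), (∏ i, r i (ω i)) ≤ pref ω) :
    (∑ ω : (∀ i, Ω i), (∏ i, p i (ω i)) * Real.log ((∏ i, p i (ω i)) / pref ω)
        ≤ ∑ i, ∑ x, p i x * Real.log (p i x / r i x)) ∧
    ((∑ ω : (∀ i, Ω i), (∏ i, p i (ω i)) * (∑ i, Real.log (L i (ω i))))
        - (∑ ω : (∀ i, Ω i),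
            (∏ i, p i (ω i)) * Real.log ((∏ i, p i (ω i)) / pref ω))
      ≥ (∑ ω : (∀ i, Ω i), (∏ i, p i (ω i)) * (∑ i, Real.log (L i (ω i))))
        - ∑ i, ∑ x, p i x * Real.log (p i x / r i x)) := by
  classical
  have key : ∑ ω : (∀ i, Ω i), (∏ i, p i (ω i)) * Real.log ((∏ i, p i (ω i)) / pref ω)
      ≤ ∑ i, ∑ x, p i x * Real.log (p i x / r i x) := by
    have step1 : ∑ ω : (∀ i, Ω i), (∏ i, p i (ω i)) * Real.log ((∏ i, p i (ω i)) / pref ω)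
        ≤ ∑ ω : (∀ i, Ω i), ∑ i, (∏ j, p j (ω j)) * Real.log (p i (ω i) / r i (ω i)) := by
      apply Finset.sum_le_sum
      intro ω _
      set P : ℝ := ∏ j, p j (ω j) with hP
      have hPnn : 0 ≤ P := Finset.prod_nonneg fun j _ => hp_nonneg j (ω j)
      rcases eq_or_lt_of_le hPnn with h0 | hPpos
      · simp [← h0]
      · have hpj : ∀ j, 0 < p j (ω j) := by
          intro j
          rcases (hp_nonneg j (ω j)).lt_or_eq with h | h
          · exact h
          · exfalso
            have : P = 0 := Finset.prod_eq_zero (Finset.mem_univ j) h.symm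
            exact absurd this (ne_of_gt hPpos)
        have hrj : ∀ j, 0 < r j (ω j) := fun j => habs j (ω j) (hpj j)
        have hR : (0:ℝ) < ∏ j, r j (ω j) := Finset.prod_pos fun j _ => hrj j
        have hpref : (0:ℝ) < pref ω := lt_of_lt_of_le hR (hdom ω)
        have hlog : Real.log (P / pref ω) ≤ Real.log (P / ∏ j, r j (ω j)) := by
          apply Real.log_le_log (div_pos hPpos hpref)
          exact div_le_div_of_nonneg_left hPnn hR (hdom ω)
        have hsplit : Real.log (P / ∏ j, r j (ω j))
            = ∑ i, Real.log (p i (ω i) / r i (ω i)) := by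
          rw [Real.log_div (ne_of_gt hPpos) (ne_of_gt hR), hP,
              Real.log_prod (fun j _ => ne_of_gt (hpj j)),
              Real.log_prod (fun j _ => ne_of_gt (hrj j)), ← Finset.sum_sub_distrib]
          exact Finset.sum_congr rfl fun i _ =>
            (Real.log_div (ne_of_gt (hpj i)) (ne_of_gt (hrj i))).symm
        calc P * Real.log (P / pref ω)
            ≤ P * Real.log (P / ∏ j, r j (ω j)) := by
              exact mul_le_mul_of_nonneg_left hlog hPnn
          _ = ∑ i, P * Real.log (p i (ω i) / r i (ω i)) := by
              rw [hsplit, Finset.mul_sum]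
    calc ∑ ω : (∀ i, Ω i), (∏ i, p i (ω i)) * Real.log ((∏ i, p i (ω i)) / pref ω)
        ≤ ∑ ω : (∀ i, Ω i), ∑ i, (∏ j, p j (ω j)) * Real.log (p i (ω i) / r i (ω i)) := step1
      _ = ∑ i, ∑ ω : (∀ j, Ω j), (∏ j, p j (ω j)) * Real.log (p i (ω i) / r i (ω i)) :=
          Finset.sum_comm
      _ = ∑ i, ∑ x, p i x * Real.log (p i x / r i x) :=
          Finset.sum_congr rfl fun i _ =>
            marg_aux Ω p hp_sum i (fun x => Real.log (p i x / r i x))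
  exact ⟨key, by linarith⟩
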